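/- Let q > 1 be an integer and define the sequence d in ℤ by d_{2n−1} = 1 + Σ_{i=0}^{n} q^{n³ − i·n} and d_{2n} = q^n for n ≥ 1. Then the subgroup of the circle 𝕋 = ℝ/ℤ characterized by d is trivial: {x ∈ 𝕋 : d_n • x → 0 as n → ∞} = {0}. -/

import Mathlib

/-!
Multiplication by an integer `m` is expanding near `0` on the circle: `‖m • y‖ = |m| ‖y‖` once
`|m| ‖y‖` is at most half the period. Hence if `q ^ n • x → 0`, the norms `‖q ^ n • x‖` are
eventually non-decreasing and tend to `0`, so `q ^ N • x = 0` for some `N`. Along the even terms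
`d (2n) = q ^ n` this gives `q ^ N • x = 0`; every exponent of `q` in `d (2n+1)` is at least `n`,
so `d (2n+1) • x = x` for `n ≥ N`, and `x = 0` follows from `d (2n+1) • x → 0`.
-/

open Filter Topology Finset

/-- The sequence `d` in `ℤ`: `d (2n-1) = γ + ∑_{i=0}^{n} q^(n³ - i·n)` and
`d (2n) = q^n`. -/
def dZ (γ q : ℕ) : ℕ → ℤ := fun k =>
  if k % 2 = 1 then
    (γ : ℤ) + ∑ i ∈ Finset.range ((k + 1) / 2 + 1), (q : ℤ) ^ (((k + 1) / 2) ^ 3 - i * ((k + 1) / 2))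
  else (q : ℤ) ^ (k / 2)

namespace AddCircle

variable {p : ℝ}

theorem exists_coe_eq_and_abs_eq_norm (y : AddCircle p) :
    ∃ x : ℝ, (x : AddCircle p) = y ∧ |x| = ‖y‖ := by
  induction y using QuotientAddGroup.induction_on with
  | H x =>
    refine ⟨x - round (p⁻¹ * x) * p, ?_, (norm_eq p).symm⟩
    rw [coe_sub, ← zsmul_eq_mul, coe_zsmul, coe_period, smul_zero, sub_zero]

theorem norm_zsmul_of_abs_mul_norm_le (hp : p ≠ 0) {m : ℤ} {y : AddCircle p}
    (h : |(m : ℝ)| * ‖y‖ ≤ |p| / 2) : ‖m • y‖ = |(m : ℝ)| * ‖y‖ := by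
  obtain ⟨x, rfl, hx⟩ := exists_coe_eq_and_abs_eq_norm y
  have hmx : |(m : ℝ) * x| = |(m : ℝ)| * ‖(x : AddCircle p)‖ := by rw [abs_mul, hx]
  rw [← coe_zsmul, zsmul_eq_mul, (norm_coe_eq_abs_iff p hp).2 (hmx ▸ h), hmx]

theorem exists_pow_zsmul_eq_zero_of_tendsto (hp : p ≠ 0) {q : ℤ} {x : AddCircle p}
    (h : Tendsto (fun n : ℕ => q ^ n • x) atTop (𝓝 0)) : ∃ N : ℕ, q ^ N • x = 0 := by
  rcases eq_or_ne q 0 with rfl | hq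
  · exact ⟨1, by simp⟩
  have hnorm : Tendsto (fun n : ℕ => ‖q ^ n • x‖) atTop (𝓝 0) := by simpa using h.norm
  have hsmall : ∀ᶠ n in atTop, |(q : ℝ)| * ‖q ^ n • x‖ ≤ |p| / 2 := by
    have hlim := hnorm.const_mul |(q : ℝ)|
    rw [mul_zero] at hlim
    exact hlim.eventually (ge_mem_nhds (by positivity))
  obtain ⟨N, hN⟩ := eventually_atTop.1 hsmall
  have hq1 : (1 : ℝ) ≤ |(q : ℝ)| := by exact_mod_cast Int.one_le_abs hq
  have hmono : Monotone fun k : ℕ => ‖q ^ (k + N) • x‖ := by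
    refine monotone_nat_of_le_succ fun k => ?_
    have hstep : q ^ (k + 1 + N) • x = q • q ^ (k + N) • x := by
      rw [smul_smul, ← pow_succ', add_right_comm]
    rw [hstep, norm_zsmul_of_abs_mul_norm_le hp (hN _ (Nat.le_add_left N k))]
    exact le_mul_of_one_le_left (norm_nonneg _) hq1
  have hzero : ‖q ^ (0 + N) • x‖ ≤ 0 :=
    hmono.ge_of_tendsto ((tendsto_add_atTop_iff_nat N).2 hnorm) 0
  exact ⟨N, by simpa using hzero⟩

end AddCircle

theorem dZ_two_mul (γ q n : ℕ) : dZ γ q (2 * n) = (q : ℤ) ^ n := by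
  simp [dZ, show 2 * n % 2 = 0 by omega]

theorem dZ_two_mul_add_one (γ q n : ℕ) :
    dZ γ q (2 * n + 1) = γ + ∑ i ∈ range (n + 2), (q : ℤ) ^ ((n + 1) ^ 3 - i * (n + 1)) := by
  simp [dZ, show (2 * n + 1) % 2 = 1 by omega, show (2 * n + 1 + 1) / 2 = n + 1 by omega]

theorem dZ_two_mul_add_one_zsmul {G : Type*} [AddCommGroup G] {γ q N n : ℕ} {x : G}
    (hx : (q : ℤ) ^ N • x = 0) (hn : N ≤ n) : dZ γ q (2 * n + 1) • x = (γ : ℤ) • x := by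
  have hexp : ∀ i ≤ n + 1, n ≤ (n + 1) ^ 3 - i * (n + 1) := by
    intro i hi
    have hcube : (n + 1) ^ 3 = (n + 1) * (n + 1) * n + (n + 1) * (n + 1) := by ring
    have := Nat.mul_le_mul_right (n + 1) hi
    have := Nat.le_mul_of_pos_left n (by positivity : 0 < (n + 1) * (n + 1))
    omega
  have hterm : ∀ i ∈ range (n + 2), (q : ℤ) ^ ((n + 1) ^ 3 - i * (n + 1)) • x = 0 := by
    intro i hi
    obtain ⟨k, hk⟩ := Nat.exists_eq_add_of_le (hn.trans (hexp i (mem_range_succ_iff.1 hi)))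
    rw [hk, pow_add, mul_comm, mul_smul, hx, smul_zero]
  rw [dZ_two_mul_add_one, add_smul, sum_smul, sum_eq_zero hterm, add_zero]

theorem statement16_general (q : ℕ) :
    {x : AddCircle (1 : ℝ) |
        Filter.Tendsto (fun n : ℕ => dZ 1 q n • x) Filter.atTop (nhds 0)} =
      {(0 : AddCircle (1 : ℝ))} := by
  ext x
  refine ⟨fun h => ?_, fun hx => by simp [Set.mem_singleton_iff.1 hx]⟩
  have heven : Tendsto (fun n : ℕ => (q : ℤ) ^ n • x) atTop (𝓝 0) := by
    simpa [Function.comp_def, dZ_two_mul] using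
      h.comp (strictMono_nat_of_lt_succ fun n => by omega : StrictMono (2 * ·)).tendsto_atTop
  obtain ⟨N, hN⟩ := AddCircle.exists_pow_zsmul_eq_zero_of_tendsto one_ne_zero heven
  have hodd : Tendsto (fun n : ℕ => dZ 1 q (2 * n + 1) • x) atTop (𝓝 0) :=
    h.comp (strictMono_nat_of_lt_succ fun n => by omega : StrictMono (2 * · + 1)).tendsto_atTop
  have hconst : ∀ᶠ n in atTop, dZ 1 q (2 * n + 1) • x = x :=
    (eventually_ge_atTop N).mono fun n hn => by simpa using dZ_two_mul_add_one_zsmul (γ := 1) hN hn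
  exact tendsto_nhds_unique tendsto_const_nhds (hodd.congr' hconst)

/-- For `γ = 1` and `q > 1`, the subgroup of the circle `𝕋 = ℝ/ℤ` characterized by `d`
is trivial. -/
theorem statement16 (q : ℕ) (hq : 1 < q) :
    {x : AddCircle (1 : ℝ) |
        Filter.Tendsto (fun n : ℕ => dZ 1 q n • x) Filter.atTop (nhds 0)} =
      {(0 : AddCircle (1 : ℝ))} :=
  statement16_general q
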